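/- Let Y ∈ ℝⁿ, W₁ ∈ ℝ^{n×q}, W₂ ∈ ℝ^{n×L}, W = [W₁ W₂], with WᵀW, W₁ᵀW₁ and W̃₂ᵀW̃₂ invertible and σ̂²(W) > 0, and set P̃ = W̃₂(W̃₂ᵀW̃₂)⁻¹W̃₂ᵀ. Let n ≥ 1, p ≥ 1 and η ≥ 0. If Yᵀ P̃ Y < σ̂²(W) · L(log n + 2η log p), then n·log σ̂²(W) + L(log n + 2η log p) > n·log σ̂²(W₁); that is, the EBIC strictly increases when the L extra columns W₂ are added to the design matrix (the deterministic core of Theorem 2(ii): the EBIC stops once the residual quadratic form of a candidate group is below the penalty). -/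

import Mathlib

/-! Write `H(W) = W (WᵀW)⁻¹ Wᵀ` for the hat matrix. Replacing `W₂` by its residual
`W̃₂ = W₂ - H(W₁) W₂` is an invertible change of basis of the columns of `W = [W₁ W₂]`, so it does
not change `H(W)`; since `W̃₂` is orthogonal to `W₁`, the hat matrix
splits as `H(W₁) + P̃`. Hence `σ̂²(W₁) = σ̂²(W) + t/n` with `t = Yᵀ P̃ Y ≥ 0`, concavity of `log`
gives `n log σ̂²(W₁) ≤ n log σ̂²(W) + t / σ̂²(W)`, and `t / σ̂²(W)` is below the penalty by
assumption. -/

open Matrix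

/-- Variance estimate from OLS with design `W`. -/
noncomputable def sigmaHat {n : ℕ} {d : Type*} [Fintype d] [DecidableEq d]
    (Y : Fin n → ℝ) (W : Matrix (Fin n) d ℝ) : ℝ :=
  (1 / (n : ℝ)) * (Y ⬝ᵥ Y - Y ⬝ᵥ ((W * (Wᵀ * W)⁻¹ * Wᵀ) *ᵥ Y))

noncomputable def hatMatrix {R m k : Type*} [CommRing R] [Fintype m] [Fintype k] [DecidableEq k]
    (W : Matrix m k R) : Matrix m m R :=
  W * (Wᵀ * W)⁻¹ * Wᵀ

section HatMatrix

variable {R m k l : Type*} [CommRing R] [Fintype m] [Fintype k] [DecidableEq k]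

theorem hatMatrix_transpose (W : Matrix m k R) : (hatMatrix W)ᵀ = hatMatrix W := by
  simp only [hatMatrix, transpose_mul, transpose_transpose, transpose_nonsing_inv,
    Matrix.mul_assoc]

theorem hatMatrix_mul_self {W : Matrix m k R} (hW : IsUnit (Wᵀ * W)) :
    hatMatrix W * hatMatrix W = hatMatrix W := by
  have hdet : IsUnit (Wᵀ * W).det := (isUnit_iff_isUnit_det _).mp hW
  calc hatMatrix W * hatMatrix W
      = W * ((Wᵀ * W)⁻¹ * ((Wᵀ * W) * ((Wᵀ * W)⁻¹ * Wᵀ))) := by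
        simp only [hatMatrix, Matrix.mul_assoc]
    _ = hatMatrix W := by
        rw [nonsing_inv_mul_cancel_left _ _ hdet, hatMatrix, Matrix.mul_assoc]

theorem hatMatrix_mul_of_isUnit (W : Matrix m k R) {U : Matrix k k R} (hU : IsUnit U) :
    hatMatrix (W * U) = hatMatrix W := by
  have hdet : IsUnit U.det := (isUnit_iff_isUnit_det _).mp hU
  have hdetT : IsUnit Uᵀ.det := by rwa [det_transpose]
  calc hatMatrix (W * U)
      = W * (U * U⁻¹) * (Wᵀ * W)⁻¹ * (Uᵀ⁻¹ * Uᵀ) * Wᵀ := by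
        rw [hatMatrix, transpose_mul, show Uᵀ * Wᵀ * (W * U) = Uᵀ * (Wᵀ * W) * U by
          simp only [Matrix.mul_assoc], Matrix.mul_inv_rev, Matrix.mul_inv_rev]
        simp only [Matrix.mul_assoc]
    _ = hatMatrix W := by
        rw [mul_nonsing_inv _ hdet, nonsing_inv_mul _ hdetT, Matrix.mul_one, Matrix.mul_one,
          hatMatrix]

theorem transpose_mul_sub_hatMatrix_mul {A : Matrix m k R} (hA : IsUnit (Aᵀ * A))
    (B : Matrix m l R) : Aᵀ * (B - hatMatrix A * B) = 0 := by
  have hdet : IsUnit (Aᵀ * A).det := (isUnit_iff_isUnit_det _).mp hA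
  rw [Matrix.mul_sub, show Aᵀ * (hatMatrix A * B) = (Aᵀ * A) * ((Aᵀ * A)⁻¹ * (Aᵀ * B)) by
      simp only [hatMatrix, Matrix.mul_assoc],
    mul_nonsing_inv_cancel_left _ _ hdet, sub_self]

variable [Fintype l] [DecidableEq l]

theorem hatMatrix_fromCols_of_transpose_mul_eq_zero {A : Matrix m k R} {B : Matrix m l R}
    (hAB : Aᵀ * B = 0) (hA : IsUnit (Aᵀ * A)) (hB : IsUnit (Bᵀ * B)) :
    hatMatrix (fromCols A B) = hatMatrix A + hatMatrix B := by
  have hBA : Bᵀ * A = 0 := by simpa using congrArg transpose hAB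
  have hgram : (fromCols A B)ᵀ * fromCols A B = fromBlocks (Aᵀ * A) 0 0 (Bᵀ * B) := by
    rw [transpose_fromCols, fromRows_mul_fromCols, hAB, hBA]
  rw [hatMatrix, hgram, inv_fromBlocks_zero₂₁_of_isUnit_iff _ _ _ (iff_of_true hA hB),
    transpose_fromCols, fromCols_mul_fromBlocks, fromCols_mul_fromRows]
  simp [hatMatrix]

theorem fromCols_sub_hatMatrix_mul (A : Matrix m k R) (B : Matrix m l R) :
    fromCols A (B - hatMatrix A * B)
      = fromCols A B
        * (fromBlocks 1 (-((Aᵀ * A)⁻¹ * (Aᵀ * B))) 0 1 : Matrix (k ⊕ l) (k ⊕ l) R) := by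
  rw [fromCols_mul_fromBlocks]
  simp only [Matrix.mul_one, Matrix.mul_zero, add_zero, Matrix.mul_neg, neg_add_eq_sub,
    hatMatrix, Matrix.mul_assoc]

theorem hatMatrix_fromCols {A : Matrix m k R} (hA : IsUnit (Aᵀ * A)) (B : Matrix m l R)
    (hB : IsUnit ((B - hatMatrix A * B)ᵀ * (B - hatMatrix A * B))) :
    hatMatrix (fromCols A B) = hatMatrix A + hatMatrix (B - hatMatrix A * B) := by
  have hU : IsUnit (fromBlocks 1 (-((Aᵀ * A)⁻¹ * (Aᵀ * B))) 0 1 : Matrix (k ⊕ l) (k ⊕ l) R) :=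
    isUnit_fromBlocks_zero₂₁.mpr ⟨isUnit_one, isUnit_one⟩
  rw [← hatMatrix_mul_of_isUnit _ hU, ← fromCols_sub_hatMatrix_mul,
    hatMatrix_fromCols_of_transpose_mul_eq_zero (transpose_mul_sub_hatMatrix_mul hA B) hA hB]

theorem dotProduct_hatMatrix_mulVec_nonneg [LinearOrder R] [IsStrictOrderedRing R]
    {W : Matrix m k R} (hW : IsUnit (Wᵀ * W)) (Y : m → R) :
    0 ≤ Y ⬝ᵥ (hatMatrix W *ᵥ Y) := by
  have hsq : Y ⬝ᵥ (hatMatrix W *ᵥ Y) = (hatMatrix W *ᵥ Y) ⬝ᵥ (hatMatrix W *ᵥ Y) := by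
    conv_lhs => rw [← hatMatrix_mul_self hW, ← mulVec_mulVec, dotProduct_mulVec,
      ← mulVec_transpose, hatMatrix_transpose]
  rw [hsq]
  exact Fintype.sum_nonneg fun _ => mul_self_nonneg _

end HatMatrix

theorem sigmaHat_eq_sigmaHat_fromCols_add {n q L : ℕ} (Y : Fin n → ℝ)
    {W₁ : Matrix (Fin n) (Fin q) ℝ} (hW₁ : IsUnit (W₁ᵀ * W₁)) (W₂ : Matrix (Fin n) (Fin L) ℝ)
    (hW₂ : IsUnit ((W₂ - hatMatrix W₁ * W₂)ᵀ * (W₂ - hatMatrix W₁ * W₂))) :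
    sigmaHat Y W₁ = sigmaHat Y (fromCols W₁ W₂)
      + Y ⬝ᵥ (hatMatrix (W₂ - hatMatrix W₁ * W₂) *ᵥ Y) / n := by
  change 1 / (n : ℝ) * (Y ⬝ᵥ Y - Y ⬝ᵥ (hatMatrix W₁ *ᵥ Y))
    = 1 / (n : ℝ) * (Y ⬝ᵥ Y - Y ⬝ᵥ (hatMatrix (fromCols W₁ W₂) *ᵥ Y)) + _
  rw [hatMatrix_fromCols hW₁ W₂ hW₂, add_mulVec, dotProduct_add]
  ring

theorem Real.log_add_le_log_add_div {s u : ℝ} (hs : 0 < s) (hu : 0 ≤ u) :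
    Real.log (s + u) ≤ Real.log s + u / s := by
  have hratio : Real.log ((s + u) / s) ≤ (s + u) / s - 1 :=
    Real.log_le_sub_one_of_pos (by positivity)
  rw [Real.log_div (by positivity) hs.ne', add_div, div_self hs.ne'] at hratio
  linarith

theorem stmt15_general (n p q L : ℕ) (hn : 1 ≤ n)
    (η : ℝ)
    (Y : Fin n → ℝ)
    (W₁ : Matrix (Fin n) (Fin q) ℝ) (W₂ : Matrix (Fin n) (Fin L) ℝ)
    (W : Matrix (Fin n) (Fin q ⊕ Fin L) ℝ) (hW : W = fromCols W₁ W₂)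
    (hW1 : IsUnit (W₁ᵀ * W₁))
    (Wt₂ : Matrix (Fin n) (Fin L) ℝ)
    (hWt₂ : Wt₂ = W₂ - W₁ * (W₁ᵀ * W₁)⁻¹ * W₁ᵀ * W₂)
    (hWt₂u : IsUnit (Wt₂ᵀ * Wt₂))
    (hσ : 0 < sigmaHat Y W)
    (Pt : Matrix (Fin n) (Fin n) ℝ)
    (hPt : Pt = Wt₂ * (Wt₂ᵀ * Wt₂)⁻¹ * Wt₂ᵀ)
    (hsmall : Y ⬝ᵥ (Pt *ᵥ Y)
      < sigmaHat Y W * ((L : ℝ) * (Real.log n + 2 * η * Real.log p))) :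
    (n : ℝ) * Real.log (sigmaHat Y W)
        + (L : ℝ) * (Real.log n + 2 * η * Real.log p)
      > (n : ℝ) * Real.log (sigmaHat Y W₁) := by
  subst hW hWt₂ hPt
  set s := sigmaHat Y (fromCols W₁ W₂)
  set t := Y ⬝ᵥ (hatMatrix (W₂ - hatMatrix W₁ * W₂) *ᵥ Y)
  have hn₀ : (0 : ℝ) < n := by exact_mod_cast hn
  have ht : 0 ≤ t := dotProduct_hatMatrix_mulVec_nonneg hWt₂u Y
  have hpen : t / s < L * (Real.log n + 2 * η * Real.log p) := by
    rw [div_lt_iff₀ hσ, mul_comm]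
    exact hsmall
  rw [sigmaHat_eq_sigmaHat_fromCols_add Y hW1 W₂ hWt₂u]
  calc (n : ℝ) * Real.log (s + t / n)
      ≤ n * (Real.log s + t / n / s) :=
        mul_le_mul_of_nonneg_left (Real.log_add_le_log_add_div hσ (by positivity)) hn₀.le
    _ = n * Real.log s + t / s := by field_simp
    _ < n * Real.log s + L * (Real.log n + 2 * η * Real.log p) := by gcongr

/-- Deterministic core of Theorem 2(ii): the EBIC strictly increases when the
residual quadratic form of a candidate group is below the penalty. -/
theorem stmt15 (n p q L : ℕ) (hn : 1 ≤ n) (hp : 1 ≤ p)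
    (η : ℝ) (hη : 0 ≤ η)
    (Y : Fin n → ℝ)
    (W₁ : Matrix (Fin n) (Fin q) ℝ) (W₂ : Matrix (Fin n) (Fin L) ℝ)
    (W : Matrix (Fin n) (Fin q ⊕ Fin L) ℝ) (hW : W = fromCols W₁ W₂)
    (hWtW : IsUnit (Wᵀ * W)) (hW1 : IsUnit (W₁ᵀ * W₁))
    (Wt₂ : Matrix (Fin n) (Fin L) ℝ)
    (hWt₂ : Wt₂ = W₂ - W₁ * (W₁ᵀ * W₁)⁻¹ * W₁ᵀ * W₂)
    (hWt₂u : IsUnit (Wt₂ᵀ * Wt₂))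
    (hσ : 0 < sigmaHat Y W)
    (Pt : Matrix (Fin n) (Fin n) ℝ)
    (hPt : Pt = Wt₂ * (Wt₂ᵀ * Wt₂)⁻¹ * Wt₂ᵀ)
    (hsmall : Y ⬝ᵥ (Pt *ᵥ Y)
      < sigmaHat Y W * ((L : ℝ) * (Real.log n + 2 * η * Real.log p))) :
    (n : ℝ) * Real.log (sigmaHat Y W)
        + (L : ℝ) * (Real.log n + 2 * η * Real.log p)
      > (n : ℝ) * Real.log (sigmaHat Y W₁) :=
  stmt15_general n p q L hn η Y W₁ W₂ W hW hW1 Wt₂ hWt₂ hWt₂u hσ Pt hPt hsmall
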